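/- Let X be a nonempty set, m ≥ 1, and Y > 0. Let F₁, F₂, … : X → ℝᵐ be a sequence of prediction rules and w₁, w₂, … be positive weights with Σᵢ wᵢ = 1. Then there exists a prediction strategy whose predictions μₙ always lie in the closed Euclidean ball of radius Y centred at 0 in ℝᵐ and which guarantees, for every sequence of signals x₁, x₂, … ∈ X and observations y₁, y₂, … in the closed ball of radius Y in ℝᵐ, for all N = 1, 2, … and all i = 1, 2, …: Σ_{n=1}^N ‖yₙ − μₙ‖² ≤ Σ_{n=1}^N ‖yₙ − Fᵢ(xₙ)‖² + 8Y² ln(1/wᵢ), where ‖·‖ is the Euclidean (l₂) norm on ℝᵐ. -/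

import Mathlib

open scoped BigOperators

/-- Given a prediction strategy `σ` (mapping a finite history of (signal, observation)
pairs together with the current signal to a prediction) and infinite sequences of
signals `x` and observations `y`, `preds σ x y n` is the prediction output on round `n`. -/
noncomputable def preds {X P : Type*} (σ : List (X × P) → X → P)
    (x : ℕ → X) (y : ℕ → P) (n : ℕ) : P :=
  σ ((List.range n).map fun i => (x i, y i)) (x n)


open scoped RealInnerProductSpace

/-- Tangent-line inequality at `t = 0` evaluated at `t = 1` for the concave function
`g t = exp (-(η * (A + 2*B*t + C*t^2)))`. -/
lemma aa_oneD (η A B C : ℝ) (hη : 0 < η) (hC : 0 ≤ C)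
    (key : ∀ t ∈ Set.Icc (0:ℝ) 1, η * (2*B + 2*C*t)^2 ≤ 2*C) :
    Real.exp (-(η*(A + 2*B + C))) ≤ Real.exp (-(η*A)) * (1 - 2*η*B) := by
  set g : ℝ → ℝ := fun t => Real.exp (-(η*(A + 2*B*t + C*t^2))) with hg
  set g1 : ℝ → ℝ := fun t => (-(η*(2*B + 2*C*t))) * g t with hg1
  have hq : ∀ t : ℝ, HasDerivAt (fun s => -(η*(A + 2*B*s + C*s^2))) (-(η*(2*B + 2*C*t))) t := by
    intro t
    have h1 : HasDerivAt (fun s : ℝ => A + 2*B*s + C*s^2) (2*B + 2*C*t) t := by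
      have : HasDerivAt (fun s : ℝ => A + 2*B*s + C*s^2) (0 + 2*B*1 + C*(2*t^1)) t := by
        exact (((hasDerivAt_const t A).add ((hasDerivAt_id t).const_mul (2*B))).add
          ((hasDerivAt_pow 2 t).const_mul C))
      convert this using 1; ring
    exact (h1.const_mul η).neg
  have hgd : ∀ t : ℝ, HasDerivAt g (g1 t) t := by
    intro t
    have := (hq t).exp
    rw [hg1, hg]
    convert this using 1
    ring
  have hgpos : ∀ t, 0 < g t := fun t => Real.exp_pos _
  -- derivative of g1
  have hg1d : ∀ t : ℝ, HasDerivAt g1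
      ((-(η*(2*C))) * g t + (-(η*(2*B + 2*C*t))) * g1 t) t := by
    intro t
    have h1 : HasDerivAt (fun s => -(η*(2*B + 2*C*s))) (-(η*(2*C))) t := by
      have : HasDerivAt (fun s : ℝ => 2*B + 2*C*s) (2*C) t := by
        simpa using ((hasDerivAt_id t).const_mul (2*C)).const_add (2*B)
      exact (this.const_mul η).neg
    exact h1.mul (hgd t)
  -- g1 is antitone on [0,1]
  have hanti : AntitoneOn g1 (Set.Icc (0:ℝ) 1) := by
    apply antitoneOn_of_deriv_nonpos (convex_Icc 0 1)
    · exact fun t _ => ((hg1d t).continuousAt).continuousWithinAt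
    · exact fun t _ => ((hg1d t).differentiableAt).differentiableWithinAt
    · intro t ht
      rw [interior_Icc] at ht
      rw [(hg1d t).deriv]
      have hk := key t (Set.mem_Icc_of_Ioo ht)
      have := hgpos t
      have hexpand : (-(η*(2*C))) * g t + (-(η*(2*B + 2*C*t))) * g1 t
          = (η * (η * (2*B + 2*C*t)^2) - η*(2*C)) * g t := by
        simp only [hg1]; ring
      rw [hexpand]
      apply mul_nonpos_of_nonpos_of_nonneg _ (le_of_lt this)
      have : η * (η * (2*B + 2*C*t)^2) ≤ η * (2*C) := by
        exact mul_le_mul_of_nonneg_left hk (le_of_lt hη)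
      linarith
  -- h t := g 0 + g1 0 * t - g t is monotone on [0,1]
  have hmono : MonotoneOn (fun t => g 0 + g1 0 * t - g t) (Set.Icc (0:ℝ) 1) := by
    apply monotoneOn_of_deriv_nonneg (convex_Icc 0 1)
    · apply ContinuousOn.sub
      · exact (continuousOn_const.add ((continuousOn_id.const_smul (g1 0))))
      · exact fun t _ => ((hgd t).continuousAt).continuousWithinAt
    · intro t _
      exact (((differentiableAt_const _).add ((differentiableAt_id).const_mul _)).sub
        (hgd t).differentiableAt).differentiableWithinAt
    · intro t ht
      rw [interior_Icc] at ht
      have hd : HasDerivAt (fun t => g 0 + g1 0 * t - g t) (g1 0 - g1 t) t := by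
        exact ((((hasDerivAt_id t).const_mul (g1 0)).const_add (g 0)).sub (hgd t)).congr_deriv (by ring)
      rw [hd.deriv]
      have : g1 t ≤ g1 0 := hanti (Set.left_mem_Icc.mpr (by norm_num))
        (Set.mem_Icc_of_Ioo ht) (le_of_lt ht.1)
      linarith
  have h01 := hmono (Set.left_mem_Icc.mpr (by norm_num)) (Set.right_mem_Icc.mpr (by norm_num))
    (by norm_num)
  have e0 : g 0 = Real.exp (-(η*A)) := by simp [hg]
  have e1 : g 1 = Real.exp (-(η*(A + 2*B + C))) := by norm_num [hg]
  have e2 : g1 0 = (-(2*η*B)) * Real.exp (-(η*A)) := by simp [hg1, e0]; ring_nf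
  simp only [mul_zero, mul_one] at h01
  nlinarith [h01, e0, e1, e2]

/-- Exp-concavity tangent inequality for the square loss. -/
lemma aa_star {E : Type*} [NormedAddCommGroup E] [InnerProductSpace ℝ E]
    (R : ℝ) (hR : 0 < R) (u v : E) (hu : ‖u‖ ≤ R) (hv : ‖v‖ ≤ R) :
    Real.exp (-((1/(2*R^2)) * ‖u‖^2)) ≤
      Real.exp (-((1/(2*R^2)) * ‖v‖^2)) * (1 + (1/R^2) * ⟪v, v - u⟫) := by
  set η : ℝ := 1/(2*R^2) with hηdef
  have hη : 0 < η := by positivity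
  set A : ℝ := ‖v‖^2 with hA
  set B : ℝ := ⟪v, u - v⟫ with hB
  set C : ℝ := ‖u - v‖^2 with hCdef
  have hC : (0:ℝ) ≤ C := by positivity
  have hnorm : ∀ t ∈ Set.Icc (0:ℝ) 1, ‖v + t • (u - v)‖ ≤ R := by
    intro t ht
    have : v + t • (u - v) = (1 - t) • v + t • u := by
      rw [smul_sub, sub_smul, one_smul]; abel
    rw [this]
    calc ‖(1 - t) • v + t • u‖ ≤ ‖(1 - t) • v‖ + ‖t • u‖ := norm_add_le _ _
      _ = (1 - t) * ‖v‖ + t * ‖u‖ := by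
          rw [norm_smul, norm_smul, Real.norm_of_nonneg (by linarith [ht.2]),
            Real.norm_of_nonneg ht.1]
      _ ≤ (1 - t) * R + t * R := by
          have h1 : (0:ℝ) ≤ 1 - t := by linarith [ht.2]
          have h2 : (0:ℝ) ≤ t := ht.1
          gcongr
      _ = R := by ring
  have hq : ∀ t : ℝ, ‖v + t • (u - v)‖^2 = A + 2*B*t + C*t^2 := by
    intro t
    rw [norm_add_sq_real, real_inner_smul_right, norm_smul, mul_pow]
    simp [hA, hB, hCdef, Real.norm_eq_abs, sq_abs]
    ring
  have key : ∀ t ∈ Set.Icc (0:ℝ) 1, η * (2*B + 2*C*t)^2 ≤ 2*C := by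
    intro t ht
    have hinner : B + C*t = ⟪v + t • (u - v), u - v⟫ := by
      rw [inner_add_left, real_inner_smul_left, real_inner_self_eq_norm_sq]
      ring_nf
      rw [hB, hCdef]; ring
    have hcs : (B + C*t)^2 ≤ (A + 2*B*t + C*t^2) * C := by
      rw [hinner, ← hq t, sq]
      calc ⟪v + t • (u - v), u - v⟫ * ⟪v + t • (u - v), u - v⟫
          ≤ (‖v + t • (u - v)‖ * ‖u - v‖) * (‖v + t • (u - v)‖ * ‖u - v‖) := by
            have h := abs_real_inner_le_norm (v + t • (u - v)) (u - v)
            nlinarith [abs_nonneg ⟪v + t • (u - v), u - v⟫,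
              neg_abs_le ⟪v + t • (u - v), u - v⟫, le_abs_self ⟪v + t • (u - v), u - v⟫]
        _ = ‖v + t • (u - v)‖^2 * ‖u - v‖^2 := by ring
    have hb : A + 2*B*t + C*t^2 ≤ R^2 := by
      rw [← hq t]
      have := hnorm t ht
      nlinarith [norm_nonneg (v + t • (u - v))]
    have hqnn : (0:ℝ) ≤ A + 2*B*t + C*t^2 := by rw [← hq t]; positivity
    have h1 : (B + C*t)^2 ≤ R^2 * C := le_trans hcs (by nlinarith)
    have h2 : η * (2*B + 2*C*t)^2 = (4 * (B + C*t)^2) / (2*R^2) := by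
      rw [hηdef]; ring
    rw [h2]
    rw [div_le_iff₀ (by positivity)]
    nlinarith
  have main := aa_oneD η A B C hη hC key
  have hu2 : ‖u‖^2 = A + 2*B + C := by
    have : u = v + (u - v) := by abel
    conv_lhs => rw [this]
    rw [norm_add_sq_real, hA, hB, hCdef]
  have hrw : 1 + (1/R^2) * ⟪v, v - u⟫ = 1 - 2*η*B := by
    have : ⟪v, v - u⟫ = -B := by
      rw [hB, ← inner_neg_right]; congr 1; abel
    rw [this, hηdef]; field_simp; ring
  rw [hu2, hrw]
  convert main using 3 <;> rw [hA]

/-- Clipping to the ball of radius `Y`. -/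
noncomputable def aaClip {E : Type*} [NormedAddCommGroup E] [InnerProductSpace ℝ E]
    (Y : ℝ) (z : E) : E :=
  if ‖z‖ ≤ Y then z else (Y / ‖z‖) • z

lemma aaClip_norm {E : Type*} [NormedAddCommGroup E] [InnerProductSpace ℝ E]
    (Y : ℝ) (hY : 0 < Y) (z : E) : ‖aaClip Y z‖ ≤ Y := by
  unfold aaClip
  split_ifs with h
  · exact h
  · push_neg at h
    have hz : (0:ℝ) < ‖z‖ := lt_trans hY h
    rw [norm_smul, Real.norm_of_nonneg (by positivity)]
    rw [div_mul_cancel₀ _ (ne_of_gt hz)]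

lemma aaClip_dist {E : Type*} [NormedAddCommGroup E] [InnerProductSpace ℝ E]
    (Y : ℝ) (hY : 0 < Y) (z y : E) (hy : ‖y‖ ≤ Y) : ‖y - aaClip Y z‖ ≤ ‖y - z‖ := by
  unfold aaClip
  split_ifs with h
  · exact le_refl _
  · push_neg at h
    have hz : (0:ℝ) < ‖z‖ := lt_trans hY h
    set c : ℝ := Y / ‖z‖ with hc
    have hc1 : c < 1 := (div_lt_one hz).mpr h
    have hc0 : 0 < c := by positivity
    have hcz : c * ‖z‖ = Y := div_mul_cancel₀ _ (ne_of_gt hz)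
    have hsq : ‖y - c • z‖^2 ≤ ‖y - z‖^2 := by
      rw [norm_sub_sq_real, norm_sub_sq_real, real_inner_smul_right, norm_smul,
        Real.norm_of_nonneg (le_of_lt hc0), mul_pow]
      have hiy : ⟪y, z⟫ ≤ Y * ‖z‖ := le_trans (real_inner_le_norm y z)
        (by have := norm_nonneg z; nlinarith)
      nlinarith [sq_nonneg (‖z‖ - Y)]
    have h1 : (0:ℝ) ≤ ‖y - z‖ := norm_nonneg _
    have h2 : (0:ℝ) ≤ ‖y - c • z‖ := norm_nonneg _
    nlinarith

/-- Mixture (Jensen) step for the aggregating algorithm. -/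
lemma aa_mix {E : Type*} [NormedAddCommGroup E] [InnerProductSpace ℝ E] [CompleteSpace E]
    (Y : ℝ) (hY : 0 < Y) (p : ℕ → ℝ) (hp : ∀ i, 0 < p i) (hps : Summable p)
    (z : ℕ → E) (hz : ∀ i, ‖z i‖ ≤ Y) (y : E) (hy : ‖y‖ ≤ Y)
    (W : ℝ) (hW : W = ∑' i, p i) (μ : E) (hμ : μ = W⁻¹ • ∑' i, p i • z i) :
    ‖μ‖ ≤ Y ∧
      ∑' i, p i * Real.exp (-((1/(8*Y^2)) * ‖y - z i‖^2)) ≤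
        W * Real.exp (-((1/(8*Y^2)) * ‖y - μ‖^2)) := by
  have hWpos : 0 < W := hW ▸ Summable.tsum_pos hps (fun i => le_of_lt (hp i)) 0 (hp 0)
  have hpz : Summable (fun i => p i • z i) := by
    apply Summable.of_norm
    apply Summable.of_nonneg_of_le (fun i => norm_nonneg _) (fun i => ?_) (hps.mul_right Y)
    rw [norm_smul, Real.norm_of_nonneg (le_of_lt (hp i))]
    exact mul_le_mul_of_nonneg_left (hz i) (le_of_lt (hp i))
  have hT : ‖∑' i, p i • z i‖ ≤ W * Y := by
    refine le_trans (norm_tsum_le_tsum_norm ?_) ?_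
    · apply Summable.of_nonneg_of_le (fun i => norm_nonneg _) (fun i => ?_) (hps.mul_right Y)
      rw [norm_smul, Real.norm_of_nonneg (le_of_lt (hp i))]
      exact mul_le_mul_of_nonneg_left (hz i) (le_of_lt (hp i))
    · rw [hW, ← tsum_mul_right]
      apply Summable.tsum_le_tsum _ _ (hps.mul_right Y)
      · intro i
        rw [norm_smul, Real.norm_of_nonneg (le_of_lt (hp i))]
        exact mul_le_mul_of_nonneg_left (hz i) (le_of_lt (hp i))
      · apply Summable.of_nonneg_of_le (fun i => norm_nonneg _) (fun i => ?_) (hps.mul_right Y)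
        rw [norm_smul, Real.norm_of_nonneg (le_of_lt (hp i))]
        exact mul_le_mul_of_nonneg_left (hz i) (le_of_lt (hp i))
  have hμY : ‖μ‖ ≤ Y := by
    rw [hμ, norm_smul, Real.norm_of_nonneg (le_of_lt (inv_pos.mpr hWpos))]
    calc W⁻¹ * ‖∑' i, p i • z i‖ ≤ W⁻¹ * (W * Y) := by
          exact mul_le_mul_of_nonneg_left hT (le_of_lt (inv_pos.mpr hWpos))
      _ = Y := by field_simp
  refine ⟨hμY, ?_⟩
  -- apply aa_star for each i, with R = 2Y, u = y - z i, v = y - μ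
  set η : ℝ := 1/(8*Y^2) with hη
  set v : E := y - μ with hv
  set e : ℝ := Real.exp (-(η * ‖v‖^2)) with he
  have hstar : ∀ i, p i * Real.exp (-(η * ‖y - z i‖^2)) ≤
      p i * (e * (1 + (1/(2*Y)^2) * ⟪v, z i - μ⟫)) := by
    intro i
    apply mul_le_mul_of_nonneg_left _ (le_of_lt (hp i))
    have h8 : (1:ℝ)/(2*(2*Y)^2) = η := by rw [hη]; ring
    have hstar' := aa_star (2*Y) (by positivity) (y - z i) v
      (by
        calc ‖y - z i‖ ≤ ‖y‖ + ‖z i‖ := norm_sub_le _ _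
          _ ≤ 2*Y := by linarith [hz i])
      (by
        calc ‖v‖ = ‖y - μ‖ := rfl
          _ ≤ ‖y‖ + ‖μ‖ := norm_sub_le _ _
          _ ≤ 2*Y := by linarith)
    rw [h8] at hstar'
    have hvv : v - (y - z i) = z i - μ := by rw [hv]; abel
    rw [hvv] at hstar'
    exact hstar'
  -- the RHS sums to W * e
  have hWsum : HasSum p W := hW ▸ hps.hasSum
  have hTsum : HasSum (fun i => p i • z i) (W • μ) := by
    have : W • μ = ∑' i, p i • z i := by
      rw [hμ, smul_smul, mul_inv_cancel₀ (ne_of_gt hWpos), one_smul]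
    rw [this]; exact hpz.hasSum
  have hzero : HasSum (fun i => p i * ⟪v, z i - μ⟫) 0 := by
    have h1 : HasSum (fun i => p i • (z i - μ)) 0 := by
      have := hTsum.sub (hWsum.smul_const μ)
      simpa [smul_sub] using this
    have h2 := (innerSL ℝ v).hasSum h1
    simpa [real_inner_smul_right] using h2
  have hRHS : HasSum (fun i => p i * (e * (1 + (1/(2*Y)^2) * ⟪v, z i - μ⟫))) (W * e) := by
    have h3 : HasSum (fun i => e * p i + (e * (1/(2*Y)^2)) * (p i * ⟪v, z i - μ⟫))
        (e * W + (e * (1/(2*Y)^2)) * 0) := (hWsum.mul_left e).add (hzero.mul_left _)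
    have hfun : (fun i => e * p i + (e * (1/(2*Y)^2)) * (p i * ⟪v, z i - μ⟫))
        = fun i => p i * (e * (1 + (1/(2*Y)^2) * ⟪v, z i - μ⟫)) := by
      funext i; ring
    rw [hfun] at h3
    convert h3 using 1
    ring
  rw [← hRHS.tsum_eq]
  apply Summable.tsum_le_tsum hstar _ hRHS.summable
  · apply Summable.of_nonneg_of_le
      (fun i => le_of_lt (mul_pos (hp i) (Real.exp_pos _))) (fun i => ?_) hps
    calc p i * Real.exp (-(η * ‖y - z i‖^2)) ≤ p i * 1 := by
          apply mul_le_mul_of_nonneg_left _ (le_of_lt (hp i))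
          rw [← Real.exp_zero]
          apply Real.exp_le_exp.mpr
          have : (0:ℝ) ≤ η * ‖y - z i‖^2 := by positivity
          linarith
      _ = p i := mul_one _

/-- The weight of expert `i` after observing history `hs`. -/
noncomputable def aaW {X E : Type*} [NormedAddCommGroup E] [InnerProductSpace ℝ E]
    (Y : ℝ) (w : ℕ → ℝ) (F : ℕ → X → E) (hs : List (X × E)) (i : ℕ) : ℝ :=
  w i * Real.exp (-((1/(8*Y^2)) *
    ((hs.map fun pr => ‖pr.2 - aaClip Y (F i pr.1)‖^2).sum)))

/-- The aggregating-algorithm strategy. -/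
noncomputable def aaStrat {X E : Type*} [NormedAddCommGroup E] [InnerProductSpace ℝ E]
    (Y : ℝ) (w : ℕ → ℝ) (F : ℕ → X → E) (hs : List (X × E)) (s : X) : E :=
  (∑' i, aaW Y w F hs i)⁻¹ • ∑' i, aaW Y w F hs i • aaClip Y (F i s)

lemma list_range_sum (f : ℕ → ℝ) (n : ℕ) :
    ((List.range n).map f).sum = ∑ k ∈ Finset.range n, f k := by
  induction n with
  | zero => simp
  | succ n ih =>
    rw [List.range_succ, List.map_append, List.sum_append, Finset.sum_range_succ, ih]
    simp

/-- Lemma 1 (AA mixture): there is a strategy with predictions in the ball of radius `Y`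
whose loss exceeds that of each prediction rule `F i` by at most `8 Y² ln(1/wᵢ)`. -/
theorem stmt0 {X : Type*} [Nonempty X] (m : ℕ) (hm : 1 ≤ m) (Y : ℝ) (hY : 0 < Y)
    (F : ℕ → X → EuclideanSpace ℝ (Fin m)) (w : ℕ → ℝ)
    (hw : ∀ i, 0 < w i) (hsum : ∑' i, w i = 1) :
    ∃ σ : List (X × EuclideanSpace ℝ (Fin m)) → X → EuclideanSpace ℝ (Fin m),
      ∀ x : ℕ → X, ∀ y : ℕ → EuclideanSpace ℝ (Fin m),
        (∀ n, y n ∈ Metric.closedBall (0 : EuclideanSpace ℝ (Fin m)) Y) →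
        (∀ n, preds σ x y n ∈ Metric.closedBall (0 : EuclideanSpace ℝ (Fin m)) Y) ∧
        ∀ N : ℕ, ∀ i : ℕ,
          ∑ n ∈ Finset.range N, ‖y n - preds σ x y n‖ ^ 2 ≤
            ∑ n ∈ Finset.range N, ‖y n - F i (x n)‖ ^ 2 +
              8 * Y ^ 2 * Real.log (1 / w i) := by
  have hsumm : Summable w := by
    by_contra h
    rw [tsum_eq_zero_of_not_summable h] at hsum
    norm_num at hsum
  refine ⟨aaStrat Y w F, ?_⟩
  intro x y hy
  have hyY : ∀ n, ‖y n‖ ≤ Y := fun n => by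
    simpa [mem_closedBall_zero_iff] using hy n
  set G : ℕ → ℕ → EuclideanSpace ℝ (Fin m) := fun i k => aaClip Y (F i (x k)) with hG
  set L : ℕ → ℕ → ℝ := fun i n => ∑ k ∈ Finset.range n, ‖y k - G i k‖^2 with hL
  set p : ℕ → ℕ → ℝ := fun n i => w i * Real.exp (-((1/(8*Y^2)) * L i n)) with hp
  have hLnn : ∀ i n, 0 ≤ L i n := fun i n =>
    Finset.sum_nonneg fun k _ => by positivity
  have hppos : ∀ n i, 0 < p n i := fun n i => mul_pos (hw i) (Real.exp_pos _)
  have hple : ∀ n i, p n i ≤ w i := by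
    intro n i
    rw [hp]
    calc w i * Real.exp (-((1/(8*Y^2)) * L i n)) ≤ w i * 1 := by
          apply mul_le_mul_of_nonneg_left _ (le_of_lt (hw i))
          apply Real.exp_le_one_iff.mpr
          have h1 : (0:ℝ) ≤ (1/(8*Y^2)) * L i n := by
            have := hLnn i n; positivity
          linarith
      _ = w i := mul_one _
  have hpsumm : ∀ n, Summable (p n) := fun n =>
    Summable.of_nonneg_of_le (fun i => le_of_lt (hppos n i)) (hple n) hsumm
  set Wf : ℕ → ℝ := fun n => ∑' i, p n i with hWf
  have hWpos : ∀ n, 0 < Wf n := fun n =>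
    Summable.tsum_pos (hpsumm n) (fun i => le_of_lt (hppos n i)) 0 (hppos n 0)
  have hW0 : Wf 0 = 1 := by
    rw [hWf]
    simp only [hp, hL]
    simpa using hsum
  -- identify the strategy's predictions
  have hwfold : ∀ n i, aaW Y w F ((List.range n).map fun k => (x k, y k)) i = p n i := by
    intro n i
    rw [aaW, List.map_map, list_range_sum]
    rfl
  have hμ : ∀ n, preds (aaStrat Y w F) x y n = (Wf n)⁻¹ • ∑' i, p n i • G i n := by
    intro n
    rw [preds, aaStrat, hWf]
    congr 1
    · congr 1
      exact tsum_congr fun i => hwfold n i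
    · exact tsum_congr fun i => by rw [hwfold n i]
  -- per-round facts
  have key : ∀ n, ‖preds (aaStrat Y w F) x y n‖ ≤ Y ∧
      Wf (n+1) ≤ Wf n * Real.exp (-((1/(8*Y^2)) * ‖y n - preds (aaStrat Y w F) x y n‖^2)) := by
    intro n
    obtain ⟨h1, h2⟩ := aa_mix Y hY (p n) (hppos n) (hpsumm n) (fun i => G i n)
      (fun i => aaClip_norm Y hY _) (y n) (hyY n) (Wf n) rfl
      (preds (aaStrat Y w F) x y n) (hμ n)
    refine ⟨h1, ?_⟩
    have hstep : ∀ i, p (n+1) i = p n i * Real.exp (-((1/(8*Y^2)) * ‖y n - G i n‖^2)) := by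
      intro i
      rw [hp]
      simp only []
      rw [show L i (n+1) = L i n + ‖y n - G i n‖^2 from Finset.sum_range_succ _ n,
        mul_add, neg_add, Real.exp_add]
      ring
    calc Wf (n+1) = ∑' i, p n i * Real.exp (-((1/(8*Y^2)) * ‖y n - G i n‖^2)) :=
          tsum_congr hstep
      _ ≤ Wf n * Real.exp (-((1/(8*Y^2)) * ‖y n - preds (aaStrat Y w F) x y n‖^2)) := h2
  refine ⟨fun n => by rw [mem_closedBall_zero_iff]; exact (key n).1, ?_⟩
  intro N i
  -- telescoping
  have htel : ∀ N, Wf N ≤ Real.exp (-((1/(8*Y^2)) *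
      ∑ n ∈ Finset.range N, ‖y n - preds (aaStrat Y w F) x y n‖^2)) := by
    intro N
    induction N with
    | zero => simp [hW0]
    | succ N ih =>
      calc Wf (N+1) ≤ Wf N * Real.exp (-((1/(8*Y^2)) *
              ‖y N - preds (aaStrat Y w F) x y N‖^2)) := (key N).2
        _ ≤ Real.exp (-((1/(8*Y^2)) *
              ∑ n ∈ Finset.range N, ‖y n - preds (aaStrat Y w F) x y n‖^2)) *
            Real.exp (-((1/(8*Y^2)) * ‖y N - preds (aaStrat Y w F) x y N‖^2)) := by
            exact mul_le_mul_of_nonneg_right ih (le_of_lt (Real.exp_pos _))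
        _ = Real.exp (-((1/(8*Y^2)) *
              ∑ n ∈ Finset.range (N+1), ‖y n - preds (aaStrat Y w F) x y n‖^2)) := by
            rw [← Real.exp_add, Finset.sum_range_succ]
            congr 1
            ring
  have hterm : p N i ≤ Wf N := Summable.le_tsum (hpsumm N) i fun j _ => le_of_lt (hppos N j)
  have hcombined : w i * Real.exp (-((1/(8*Y^2)) * L i N)) ≤
      Real.exp (-((1/(8*Y^2)) *
        ∑ n ∈ Finset.range N, ‖y n - preds (aaStrat Y w F) x y n‖^2)) :=
    le_trans hterm (htel N)
  set S : ℝ := ∑ n ∈ Finset.range N, ‖y n - preds (aaStrat Y w F) x y n‖^2 with hS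
  -- take logarithms
  have hlog := Real.log_le_log (mul_pos (hw i) (Real.exp_pos _)) hcombined
  rw [Real.log_mul (ne_of_gt (hw i)) (ne_of_gt (Real.exp_pos _)),
    Real.log_exp, Real.log_exp] at hlog
  have hY2 : (0:ℝ) < Y^2 := by positivity
  have hSle : S ≤ L i N + 8 * Y^2 * Real.log (1 / w i) := by
    have hlogw : Real.log (1 / w i) = - Real.log (w i) := by
      rw [one_div, Real.log_inv]
    rw [hlogw]
    have h8 : (0:ℝ) < 8*Y^2 := by positivity
    have h1 : 1/(8*Y^2) * S ≤ 1/(8*Y^2) * L i N - Real.log (w i) := by linarith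
    have h2 := mul_le_mul_of_nonneg_left h1 (le_of_lt h8)
    have e1 : (8*Y^2) * (1/(8*Y^2) * S) = S := by field_simp
    have e2 : (8*Y^2) * (1/(8*Y^2) * L i N) = L i N := by field_simp
    rw [e1, mul_sub, e2] at h2
    linarith
  have hLle : L i N ≤ ∑ n ∈ Finset.range N, ‖y n - F i (x n)‖^2 := by
    rw [hL]
    apply Finset.sum_le_sum
    intro k _
    have h := aaClip_dist Y hY (F i (x k)) (y k) (hyY k)
    have h2 : (0:ℝ) ≤ ‖y k - aaClip Y (F i (x k))‖ := norm_nonneg _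
    nlinarith
  calc S ≤ L i N + 8 * Y^2 * Real.log (1 / w i) := hSle
    _ ≤ ∑ n ∈ Finset.range N, ‖y n - F i (x n)‖^2 + 8 * Y^2 * Real.log (1 / w i) := by
        linarith
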